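/- Let w : ℕ → Fin m → ℝ be weights with w 1 i = 1 for all i, updated by w (t+1) i = w t i * exp(-η * [h_t(x_i) = y_i]), where h_t are hypotheses and η > 0. Let D_t be the normalized distribution of w t, and α_t = Pr_{i ~ D_t}[h_t(x_i) = y_i]. Then for every i, exp(-η * H(x_i, y_i)) ≤ m * exp(-η * Σ_{t=1}^T α_t + T η²), where H(x,y) = Σ_{t=1}^T [h_t(x) = y]. Consequently, Σ_{t=1}^T α_t ≤ ln(m)/η + ηT + H(x_i, y_i). -/

import Mathlib

/-!
All weights start at `1`, so the total weight starts at `m`. Since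
`exp (-η ℓ) ≤ 1 - η ℓ + η²` for losses `ℓ ∈ [0, 1]` and `1 + z ≤ exp z`, each round multiplies the
total weight by at most `exp (-η α_t + η²)`, where `α_t` is the expected loss under the normalized
weights. A single example's weight `exp (-η H(x_i, y_i))` is at most the total weight, and taking
logarithms gives the bound on `∑ α_t`.
-/

open Finset Real

theorem Real.exp_neg_le_one_sub_add_sq {x : ℝ} (hx : 0 ≤ x) : exp (-x) ≤ 1 - x + x ^ 2 := by
  have hpos : 0 < 1 + x := by linarith
  calc exp (-x) = (exp x)⁻¹ := exp_neg x
    _ ≤ (1 + x)⁻¹ := inv_anti₀ hpos (by linarith [add_one_le_exp x])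
    _ ≤ 1 - x + x ^ 2 := by
      rw [inv_le_iff_one_le_mul₀' hpos]
      nlinarith [pow_nonneg hx 3]

theorem Real.exp_neg_mul_le_one_sub_add_sq {η c : ℝ} (hη : 0 ≤ η) (hc : c ∈ Set.Icc (0 : ℝ) 1) :
    exp (-η * c) ≤ 1 - η * c + η ^ 2 := by
  have hηc : η * c ≤ η := mul_le_of_le_one_right hη hc.2
  calc exp (-η * c) = exp (-(η * c)) := by rw [neg_mul]
    _ ≤ 1 - η * c + (η * c) ^ 2 := exp_neg_le_one_sub_add_sq (mul_nonneg hη hc.1)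
    _ ≤ 1 - η * c + η ^ 2 := by gcongr; exact mul_nonneg hη hc.1

theorem sum_mul_div_sum_mul {ι : Type*} [Fintype ι] {w : ι → ℝ} (hw : ∀ j, 0 ≤ w j)
    (ℓ : ι → ℝ) : (∑ j, w j) * ∑ j, (w j / ∑ k, w k) * ℓ j = ∑ j, w j * ℓ j := by
  rcases (sum_nonneg fun j _ => hw j).eq_or_lt with hW | hW
  · have hw0 : ∀ j, w j = 0 := fun j =>
      (sum_eq_zero_iff_of_nonneg fun k _ => hw k).mp hW.symm j (mem_univ j)
    simp [hw0]
  · rw [mul_sum]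
    exact sum_congr rfl fun j _ => by field_simp

theorem sum_mul_exp_neg_mul_le {ι : Type*} [Fintype ι] {η : ℝ} (hη : 0 ≤ η) {w ℓ : ι → ℝ}
    (hw : ∀ j, 0 ≤ w j) (hℓ : ∀ j, ℓ j ∈ Set.Icc (0 : ℝ) 1) :
    ∑ j, w j * exp (-η * ℓ j)
      ≤ (∑ j, w j) * exp (-η * ∑ j, (w j / ∑ k, w k) * ℓ j + η ^ 2) := by
  set α := ∑ j, (w j / ∑ k, w k) * ℓ j
  calc ∑ j, w j * exp (-η * ℓ j) ≤ ∑ j, w j * (1 - η * ℓ j + η ^ 2) :=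
        sum_le_sum fun j _ =>
          mul_le_mul_of_nonneg_left (exp_neg_mul_le_one_sub_add_sq hη (hℓ j)) (hw j)
    _ = (∑ j, w j) * (1 - η * α + η ^ 2) := by
        have hα : (∑ j, w j) * α = ∑ j, w j * ℓ j := sum_mul_div_sum_mul hw ℓ
        simp only [mul_add, mul_sub, mul_one, sum_add_distrib, sum_sub_distrib, ← sum_mul,
          mul_left_comm _ η, ← mul_sum, ← hα]
    _ ≤ (∑ j, w j) * exp (-η * α + η ^ 2) := by
        gcongr
        · exact sum_nonneg fun j _ => hw j
        · linarith [add_one_le_exp (-η * α + η ^ 2)]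

theorem eq_mul_exp_sum_Icc_of_eq_mul_exp {W a : ℕ → ℝ}
    (h : ∀ t, 1 ≤ t → W (t + 1) = W t * exp (a t)) (T : ℕ) :
    W (T + 1) = W 1 * exp (∑ t ∈ Icc 1 T, a t) := by
  induction T with
  | zero => simp
  | succ n ih => rw [h _ (by omega), ih, sum_Icc_succ_top (by omega), exp_add, mul_assoc]

theorem le_mul_exp_sum_Icc_of_le_mul_exp {W a : ℕ → ℝ}
    (h : ∀ t, 1 ≤ t → W (t + 1) ≤ W t * exp (a t)) (T : ℕ) :
    W (T + 1) ≤ W 1 * exp (∑ t ∈ Icc 1 T, a t) := by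
  induction T with
  | zero => simp
  | succ n ih =>
    calc W (n + 1 + 1) ≤ W (n + 1) * exp (a (n + 1)) := h _ (by omega)
      _ ≤ W 1 * exp (∑ t ∈ Icc 1 n, a t) * exp (a (n + 1)) := by gcongr
      _ = W 1 * exp (∑ t ∈ Icc 1 (n + 1), a t) := by
        rw [sum_Icc_succ_top (by omega), exp_add, mul_assoc]

theorem le_log_div_add_add_of_exp_neg_mul_le {η M L S T : ℝ} (hη : 0 < η) (hM : 0 < M)
    (h : exp (-η * L) ≤ M * exp (-η * S + T * η ^ 2)) : S ≤ log M / η + η * T + L := by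
  have hlog := log_le_log (exp_pos _) h
  rw [log_exp, log_mul hM.ne' (exp_pos _).ne', log_exp] at hlog
  have : η * S ≤ η * (log M / η + η * T + L) := by
    rw [mul_add, mul_add, mul_div_cancel₀ _ hη.ne']
    nlinarith
  exact le_of_mul_le_mul_left this hη

theorem hedge_potential_general {X Y : Type*} [DecidableEq Y] (m T : ℕ)
    (η : ℝ) (hη : 0 < η)
    (x : Fin m → X) (y : Fin m → Y) (h : ℕ → X → Y)
    (w : ℕ → Fin m → ℝ)
    (hw1 : ∀ i, w 1 i = 1)
    (hwrec : ∀ t, 1 ≤ t → ∀ i, w (t + 1) i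
      = w t i * Real.exp (-η * (if h t (x i) = y i then (1 : ℝ) else 0)))
    (α : ℕ → ℝ)
    (hα : ∀ t, α t = ∑ i, (w t i / ∑ j, w t j) * (if h t (x i) = y i then (1 : ℝ) else 0))
    (H : X → Y → ℝ)
    (hH : ∀ a b, H a b = ∑ t ∈ Finset.Icc 1 T, (if h t a = b then (1 : ℝ) else 0)) :
    ∀ i : Fin m,
      Real.exp (-η * H (x i) (y i))
        ≤ m * Real.exp (-η * ∑ t ∈ Finset.Icc 1 T, α t + T * η ^ 2) ∧
      ∑ t ∈ Finset.Icc 1 T, α t ≤ Real.log m / η + η * T + H (x i) (y i) := by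
  intro i
  have hloss : ∀ t j, (if h t (x j) = y j then (1 : ℝ) else 0) ∈ Set.Icc (0 : ℝ) 1 :=
    fun t j => by split_ifs <;> norm_num
  have hclosed : ∀ t j, w (t + 1) j
      = exp (-η * ∑ s ∈ Icc 1 t, (if h s (x j) = y j then (1 : ℝ) else 0)) := fun t j => by
    rw [eq_mul_exp_sum_Icc_of_eq_mul_exp (W := (w · j)) (fun s hs => hwrec s hs j) t, hw1,
      one_mul, mul_sum]
  have hpos : ∀ t, 1 ≤ t → ∀ j, 0 ≤ w t j := fun t ht j => by
    obtain ⟨s, rfl⟩ := Nat.exists_eq_add_of_le' ht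
    exact (hclosed s j).symm ▸ (exp_pos _).le
  have hpot : ∑ j, w (T + 1) j ≤ m * exp (-η * ∑ t ∈ Icc 1 T, α t + T * η ^ 2) := by
    have hstep : ∀ t, 1 ≤ t → ∑ j, w (t + 1) j ≤ (∑ j, w t j) * exp (-η * α t + η ^ 2) :=
      fun t ht => by
        simp only [hwrec t ht, hα t]
        exact sum_mul_exp_neg_mul_le hη.le (hpos t ht) (hloss t)
    convert le_mul_exp_sum_Icc_of_le_mul_exp (W := fun t => ∑ j, w t j) hstep T using 2
    · simp [hw1]
    · simp [sum_add_distrib, mul_sum]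
  have hfirst : exp (-η * H (x i) (y i)) ≤ m * exp (-η * ∑ t ∈ Icc 1 T, α t + T * η ^ 2) :=
    calc exp (-η * H (x i) (y i)) = w (T + 1) i := by rw [hclosed, hH]
      _ ≤ ∑ j, w (T + 1) j := single_le_sum (fun j _ => hpos _ (by omega) j) (mem_univ i)
      _ ≤ _ := hpot
  exact ⟨hfirst, le_log_div_add_add_of_exp_neg_mul_le hη (Nat.cast_pos.mpr i.pos) hfirst⟩

/-- Hedge potential analysis: with weights initialized to 1 and multiplicatively
updated by `exp(-η·[h_t(x_i)=y_i])`, every example's exponentiated score is bounded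
by the potential, and consequently `Σ α_t ≤ ln(m)/η + ηT + H(x_i,y_i)`. -/
theorem hedge_potential {X Y : Type*} [DecidableEq Y] (m T : ℕ) (hm : 1 ≤ m)
    (η : ℝ) (hη : 0 < η)
    (x : Fin m → X) (y : Fin m → Y) (h : ℕ → X → Y)
    (w : ℕ → Fin m → ℝ)
    (hw1 : ∀ i, w 1 i = 1)
    (hwrec : ∀ t, 1 ≤ t → ∀ i, w (t + 1) i
      = w t i * Real.exp (-η * (if h t (x i) = y i then (1 : ℝ) else 0)))
    (α : ℕ → ℝ)
    (hα : ∀ t, α t = ∑ i, (w t i / ∑ j, w t j) * (if h t (x i) = y i then (1 : ℝ) else 0))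
    (H : X → Y → ℝ)
    (hH : ∀ a b, H a b = ∑ t ∈ Finset.Icc 1 T, (if h t a = b then (1 : ℝ) else 0)) :
    ∀ i : Fin m,
      Real.exp (-η * H (x i) (y i))
        ≤ m * Real.exp (-η * ∑ t ∈ Finset.Icc 1 T, α t + T * η ^ 2) ∧
      ∑ t ∈ Finset.Icc 1 T, α t ≤ Real.log m / η + η * T + H (x i) (y i) :=
  hedge_potential_general m T η hη x y h w hw1 hwrec α hα H hH
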